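/- Let R be of type E_6 and set v_2 := s_2 s_4 s_5 s_3 s_6 s_4 s_1 s_3 s_5 s_4 s_2 ∈ W. Then: (1) v_2 is the unique element of minimal length in W with v_2^{-1}(α_0) = −α_2, and v_2^{-1} = v_2; (2) v_2(α_1) = α_5, v_2(α_3) = α_6, v_2(α_4) = α_2 + α_3 + 2α_4 + α_5, and v_2(ω_2 − α_2) = ω_2 − α_2. -/

import Mathlib

noncomputable section

open scoped Classical

local notation "⟪" x ", " y "⟫" => @inner ℝ _ _ x y

namespace PaperFormal

variable (V : Type*) [NormedAddCommGroup V] [InnerProductSpace ℝ V] [FiniteDimensional ℝ V]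

/-- The reflection of the Euclidean space `V` in the hyperplane orthogonal to `v`,
i.e. `β ↦ β - (2⟪β,v⟫/⟪v,v⟫) v`. -/
def sref (v : V) : V ≃ₗᵢ[ℝ] V := Submodule.reflection (ℝ ∙ v)ᗮ

/-- A reduced irreducible crystallographic root system `R` in the Euclidean space `V`,
together with a fixed base of simple roots `a 1, …, a n`. -/
structure RootSystemWithBase (n : ℕ) : Type _ where
  /-- the set of roots -/
  R : Set V
  /-- the simple roots `a 1, …, a n` (values outside `{1, …, n}` are irrelevant) -/
  a : ℕ → V
  finite : R.Finite
  ne_zero : ∀ β ∈ R, β ≠ 0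
  refl_mem : ∀ α ∈ R, ∀ β ∈ R, sref V α β ∈ R
  crystallographic : ∀ α ∈ R, ∀ β ∈ R, ∃ k : ℤ, 2 * ⟪β, α⟫ / ⟪α, α⟫ = (k : ℝ)
  reduced : ∀ α ∈ R, ∀ t : ℝ, t • α ∈ R → t = 1 ∨ t = -1
  irreducible : ∀ P : Set V, (∀ x ∈ R, ∀ y ∈ R, x ∈ P → ⟪x, y⟫ ≠ 0 → y ∈ P) →
      (R ∩ P).Nonempty → R ⊆ P
  simple_mem : ∀ i ∈ Finset.Icc 1 n, a i ∈ R
  indep : LinearIndependent ℝ (fun i : (Set.Icc 1 n : Set ℕ) => a i)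
  span_top : Submodule.span ℝ (a '' Set.Icc 1 n) = ⊤
  root_combo : ∀ β ∈ R, ∃ c : ℕ → ℤ, ((∀ i, 0 ≤ c i) ∨ (∀ i, c i ≤ 0)) ∧
      β = ∑ i ∈ Finset.Icc 1 n, (c i : ℝ) • a i

namespace RootSystemWithBase

variable {V} {n : ℕ} (S : RootSystemWithBase V n)

/-- The simple reflection `s i` associated to the simple root `a i`. -/
def s (i : ℕ) : V ≃ₗᵢ[ℝ] V := sref V (S.a i)

/-- The product of the simple reflections along a list of indices
(leftmost factor acting last). -/
def prodW (l : List ℕ) : V ≃ₗᵢ[ℝ] V := (l.map S.s).prod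

/-- The parabolic subgroup `W_J` of the Weyl group generated by the simple reflections
`s i` for `i ∈ J`. -/
def WJ (J : Set ℕ) : Subgroup (V ≃ₗᵢ[ℝ] V) :=
  Subgroup.closure (S.s '' (J ∩ Set.Icc 1 n))

/-- The Weyl group `W`, generated by all simple reflections. -/
def W : Subgroup (V ≃ₗᵢ[ℝ] V) := S.WJ Set.univ

/-- The length of `w` with respect to the simple reflections indexed by `J`:
the least length of a word in these reflections expressing `w`. -/
def lenJ (J : Set ℕ) (w : V ≃ₗᵢ[ℝ] V) : ℕ :=
  sInf {k | ∃ l : List ℕ, (∀ i ∈ l, i ∈ J ∩ Set.Icc 1 n) ∧ l.length = k ∧ w = S.prodW l}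

/-- The length function `ℓ` of the Weyl group. -/
def len (w : V ≃ₗᵢ[ℝ] V) : ℕ := S.lenJ Set.univ w

/-- `w` is the longest element `w_{0,J}` of the parabolic subgroup `W_J`. -/
def IsLongest (J : Set ℕ) (w : V ≃ₗᵢ[ℝ] V) : Prop :=
  w ∈ S.WJ J ∧ ∀ x ∈ S.WJ J, S.lenJ J x ≤ S.lenJ J w

/-- `β` is a positive root (with respect to the base `a`). -/
def IsPos (β : V) : Prop :=
  β ∈ S.R ∧ ∃ c : ℕ → ℝ, (∀ i, 0 ≤ c i) ∧ β = ∑ i ∈ Finset.Icc 1 n, c i • S.a i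

/-- `β` is a negative root. -/
def IsNeg (β : V) : Prop := S.IsPos (-β)

/-- `h` is the highest root `α_0`: a root such that `h - β` is a nonnegative combination of
the simple roots for every root `β`. -/
def IsHighest (h : V) : Prop :=
  h ∈ S.R ∧ ∀ β ∈ S.R, ∃ c : ℕ → ℝ, (∀ i, 0 ≤ c i) ∧
    h - β = ∑ i ∈ Finset.Icc 1 n, c i • S.a i

/-- The root system is simply laced: all roots have the same length. -/
def SimplyLaced : Prop := ∀ α ∈ S.R, ∀ β ∈ S.R, ⟪α, α⟫ = ⟪β, β⟫

/-- `ω` is the fundamental weight `ω_r` dual to the simple root `a r`: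
`⟨ω, a j⟩ = δ_{rj}` for `1 ≤ j ≤ n`. -/
def IsFundamental (r : ℕ) (ω : V) : Prop :=
  ∀ j ∈ Finset.Icc 1 n, 2 * ⟪ω, S.a j⟫ / ⟪S.a j, S.a j⟫ = if j = r then 1 else 0

/-- A weight `ω` is minuscule: `⟨ω, β⟩ ≤ 1` for every positive root `β`. -/
def Minuscule (ω : V) : Prop := ∀ β, S.IsPos β → 2 * ⟪ω, β⟫ / ⟪β, β⟫ ≤ 1

end RootSystemWithBase

variable {V}

/-- Adjacency in the Dynkin diagram of type `E_n` (`n = 6, 7, 8`, Bourbaki labeling):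
`α_2` is the branch node attached to `α_4`; `α_1, α_3, α_4, …, α_n` form a chain. -/
def adjE (i j : ℕ) : Prop :=
  (i, j) ∈ ([(1,3),(3,4),(2,4),(4,5),(5,6),(6,7),(7,8)] : List (ℕ × ℕ)) ∨
  (j, i) ∈ ([(1,3),(3,4),(2,4),(4,5),(5,6),(6,7),(7,8)] : List (ℕ × ℕ))

/-- The element `v_2 = s_2 s_4 s_5 s_3 s_6 s_4 s_1 s_3 s_5 s_4 s_2` of the Weyl group of `E_6`. -/
def v2E6 (S : RootSystemWithBase V 6) : V ≃ₗᵢ[ℝ] V :=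
  S.prodW [2, 4, 5, 3, 6, 4, 1, 3, 5, 4, 2]

/-!
In coordinates with respect to the simple roots, `s_j β = β - ⟨β, α_j⟩ α_j`. Every `u(α_2)` with
`u ∈ W` is a root of squared length 2, so by Cauchy–Schwarz `|⟨β, α_j⟩| ≤ 1` unless `β = ±α_j`:
a simple reflection changes the height of such a root by at most 1, or swaps the heights `1` and
`-1`. Hence `psi`, twice the height moved one step towards zero, changes by at most 2. As
`psi α_2 = 1` and `psi (-α_0) = -21`, every `u` with `u(α_2) = -α_0` has length at least 11, which
`v_2` attains. A word of length 11 sending `α_2` to `-α_0` must lower `psi` by exactly 2 at every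
letter, and a finite search through these words shows that all of them give the same element of
`W`. The remaining claims are computations in coordinates.
-/

section

omit [FiniteDimensional ℝ V]

theorem sref_apply (v x : V) : sref V v x = x - (2 * ⟪x, v⟫ / ⟪v, v⟫) • v := by
  rw [sref, Submodule.reflection_apply, Submodule.starProjection_orthogonal_val,
    Submodule.starProjection_singleton, real_inner_comm x v]
  simp only [RCLike.ofReal_real_eq_id, id_eq]
  push_cast [real_inner_self_eq_norm_sq]
  module

theorem inner_le_two_of_inner_self_eq_two {x y : V} (hx : ⟪x, x⟫ = 2) (hy : ⟪y, y⟫ = 2) :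
    ⟪x, y⟫ ≤ 2 ∧ (⟪x, y⟫ = 2 → x = y) := by
  have hsub : ⟪x - y, x - y⟫ = 4 - 2 * ⟪x, y⟫ := by
    rw [inner_sub_sub_self, hx, hy, real_inner_comm]; ring
  refine ⟨by linarith [real_inner_self_nonneg (x := x - y)], fun h => ?_⟩
  rw [h] at hsub
  exact sub_eq_zero.mp (inner_self_eq_zero.mp (by linarith : ⟪x - y, x - y⟫ = 0))

theorem Finset.sum_Icc_one_eq_sum_fin {M : Type*} [AddCommMonoid M] (n : ℕ) (f : ℕ → M) :
    ∑ i ∈ Finset.Icc 1 n, f i = ∑ i : Fin n, f (i + 1) := by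
  rw [Fin.sum_univ_eq_sum_range (fun i => f (i + 1)), Finset.range_eq_Ico, Finset.sum_Ico_add']
  rfl

theorem List.exists_map_fin_succ {n : ℕ} {l : List ℕ} (hl : ∀ i ∈ l, i ∈ Set.Icc 1 n) :
    ∃ l' : List (Fin n), l = l'.map fun j : Fin n => (j : ℕ) + 1 := by
  induction l with
  | nil => exact ⟨[], rfl⟩
  | cons i t ih =>
    obtain ⟨l', rfl⟩ := ih fun j hj => hl j (List.mem_cons_of_mem i hj)
    obtain ⟨hi₁, hi₂⟩ := hl i List.mem_cons_self
    exact ⟨⟨i - 1, by omega⟩ :: l', by rw [List.map_cons]; congr; simp only; omega⟩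

section CartanCoordinates

open Matrix

variable {n : ℕ}

def cartanReflect (C : Matrix (Fin n) (Fin n) ℤ) (j : Fin n) (c : Fin n → ℤ) : Fin n → ℤ :=
  c - (c ᵥ* C) j • Pi.single j 1

def height (c : Fin n → ℤ) : ℤ := ∑ i, c i

def psi (c : Fin n → ℤ) : ℤ := if 0 < height c then 2 * height c - 1 else 2 * height c + 1

/-- Every word `l` of length `k` with `l.foldr (cartanReflect C) c₀ = c` along which `psi` drops
by 2 at each letter satisfies `l.foldr (cartanReflect C) (Pi.single i 1) = M i`; the recursion
searches backwards from `c`. -/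
def GeodesicsAgree (C : Matrix (Fin n) (Fin n) ℤ) (c₀ : Fin n → ℤ) :
    ℕ → (Fin n → ℤ) → (Fin n → Fin n → ℤ) → Prop
  | 0, c, M => c = c₀ → M = fun i => Pi.single i 1
  | k + 1, c, M => ∀ j, psi (cartanReflect C j c) = psi c + 2 →
      GeodesicsAgree C c₀ k (cartanReflect C j c) fun i => cartanReflect C j (M i)

instance GeodesicsAgree.decidable (C : Matrix (Fin n) (Fin n) ℤ) (c₀ : Fin n → ℤ) :
    ∀ k c M, Decidable (GeodesicsAgree C c₀ k c M)
  | 0, c, _ => inferInstanceAs (Decidable (c = c₀ → _))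
  | k + 1, c, M =>
    have : ∀ j, Decidable (GeodesicsAgree C c₀ k (cartanReflect C j c)
        fun i => cartanReflect C j (M i)) :=
      fun _ => GeodesicsAgree.decidable C c₀ k _ _
    inferInstanceAs (Decidable (∀ j, psi (cartanReflect C j c) = psi c + 2 →
      GeodesicsAgree C c₀ k (cartanReflect C j c) fun i => cartanReflect C j (M i)))

variable {C : Matrix (Fin n) (Fin n) ℤ}

theorem cartanReflect_cartanReflect (hdiag : ∀ j, C j j = 2) (j : Fin n) (c : Fin n → ℤ) :
    cartanReflect C j (cartanReflect C j c) = c := by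
  have hpair : (cartanReflect C j c ᵥ* C) j = -(c ᵥ* C) j := by
    rw [cartanReflect, sub_vecMul, smul_vecMul, single_one_vecMul, Pi.sub_apply, Pi.smul_apply,
      row_apply, hdiag, smul_eq_mul]
    ring
  rw [cartanReflect, hpair, cartanReflect]
  simp

theorem height_cartanReflect (j : Fin n) (c : Fin n → ℤ) :
    height (cartanReflect C j c) = height c - (c ᵥ* C) j := by
  simp only [height, cartanReflect, Pi.sub_apply, Pi.smul_apply, Finset.sum_sub_distrib,
    smul_eq_mul, ← Finset.mul_sum, Finset.sum_pi_single', Finset.mem_univ, if_true, mul_one]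

end CartanCoordinates

namespace RootSystemWithBase

open scoped Matrix

variable {n : ℕ} (S : RootSystemWithBase V n)

theorem s_mul_self (i : ℕ) : S.s i * S.s i = 1 := by
  refine LinearIsometryEquiv.ext fun x => ?_
  show S.s i (S.s i x) = x
  exact Submodule.reflection_reflection _ x

theorem prodW_cons (i : ℕ) (l : List ℕ) : S.prodW (i :: l) = S.s i * S.prodW l := by
  simp [prodW]

theorem prodW_append (l₁ l₂ : List ℕ) : S.prodW (l₁ ++ l₂) = S.prodW l₁ * S.prodW l₂ := by
  simp [prodW]

theorem inv_prodW (l : List ℕ) : (S.prodW l)⁻¹ = S.prodW l.reverse := by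
  induction l with
  | nil => simp [prodW]
  | cons i t ih =>
    rw [prodW_cons, mul_inv_rev, ih, inv_eq_of_mul_eq_one_right (S.s_mul_self i),
      List.reverse_cons, prodW_append]
    simp [prodW]

theorem prodW_mem_W {l : List ℕ} (hl : ∀ i ∈ l, i ∈ Set.Icc 1 n) : S.prodW l ∈ S.W := by
  induction l with
  | nil => exact one_mem _
  | cons i t ih =>
    rw [prodW_cons]
    exact mul_mem (Subgroup.subset_closure ⟨i, ⟨trivial, hl i List.mem_cons_self⟩, rfl⟩)
      (ih fun j hj => hl j (List.mem_cons_of_mem i hj))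

theorem exists_prodW_of_mem_W {u : V ≃ₗᵢ[ℝ] V} (hu : u ∈ S.W) :
    ∃ l : List ℕ, (∀ i ∈ l, i ∈ Set.Icc 1 n) ∧ u = S.prodW l := by
  induction hu using Subgroup.closure_induction with
  | mem x hx =>
    obtain ⟨i, ⟨-, hi⟩, rfl⟩ := hx
    exact ⟨[i], by simpa using hi, by simp [prodW]⟩
  | one => exact ⟨[], by simp, rfl⟩
  | mul x y _ _ ihx ihy =>
    obtain ⟨l₁, hl₁, rfl⟩ := ihx
    obtain ⟨l₂, hl₂, rfl⟩ := ihy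
    refine ⟨l₁ ++ l₂, fun i hi => ?_, (S.prodW_append l₁ l₂).symm⟩
    rcases List.mem_append.mp hi with h | h
    exacts [hl₁ i h, hl₂ i h]
  | inv x _ ihx =>
    obtain ⟨l, hl, rfl⟩ := ihx
    exact ⟨l.reverse, fun i hi => hl i (List.mem_reverse.mp hi), S.inv_prodW l⟩

theorem len_prodW_le {l : List ℕ} (hl : ∀ i ∈ l, i ∈ Set.Icc 1 n) :
    S.len (S.prodW l) ≤ l.length :=
  Nat.sInf_le ⟨l, fun i hi => ⟨trivial, hl i hi⟩, rfl, rfl⟩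

theorem exists_fin_word_length_eq_len {u : V ≃ₗᵢ[ℝ] V} (hu : u ∈ S.W) :
    ∃ l : List (Fin n), l.length = S.len u ∧
      u = S.prodW (l.map fun j : Fin n => (j : ℕ) + 1) := by
  obtain ⟨l, hl, rfl⟩ := S.exists_prodW_of_mem_W hu
  obtain ⟨l', hl', hlen, heq⟩ :=
    Nat.sInf_mem (s := {k | ∃ l' : List ℕ, (∀ i ∈ l', i ∈ Set.univ ∩ Set.Icc 1 n) ∧
      l'.length = k ∧ S.prodW l = S.prodW l'})
      ⟨l.length, l, fun i hi => ⟨trivial, hl i hi⟩, rfl, rfl⟩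
  obtain ⟨l'', rfl⟩ := List.exists_map_fin_succ fun i hi => (hl' i hi).2
  rw [List.length_map] at hlen
  exact ⟨l'', hlen, heq⟩

theorem prodW_apply_mem_R {l : List ℕ} (hl : ∀ i ∈ l, i ∈ Set.Icc 1 n) {β : V} (hβ : β ∈ S.R) :
    S.prodW l β ∈ S.R := by
  induction l with
  | nil => exact hβ
  | cons i t ih =>
    rw [prodW_cons, LinearIsometryEquiv.coe_mul, Function.comp_apply]
    exact S.refl_mem _ (S.simple_mem i (Finset.mem_Icc.mpr (hl i List.mem_cons_self))) _
      (ih fun j hj => hl j (List.mem_cons_of_mem i hj))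

theorem ext_simple {σ τ : V ≃ₗᵢ[ℝ] V} (h : ∀ i : Fin n, σ (S.a (i + 1)) = τ (S.a (i + 1))) :
    σ = τ := by
  refine LinearIsometryEquiv.toLinearEquiv_injective <| LinearEquiv.toLinearMap_injective <|
    LinearMap.ext_on S.span_top ?_
  rintro _ ⟨i, ⟨hi₁, hi₂⟩, rfl⟩
  simpa [show i - 1 + 1 = i by omega] using h ⟨i - 1, by omega⟩

theorem eq_of_inner_simple {x y : V} (h : ∀ i : Fin n, ⟪x, S.a (i + 1)⟫ = ⟪y, S.a (i + 1)⟫) :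
    x = y := by
  have horth : ∀ z ∈ Submodule.span ℝ (S.a '' Set.Icc 1 n), ⟪x - y, z⟫ = 0 := by
    intro z hz
    induction hz using Submodule.span_induction with
    | mem z hz =>
      obtain ⟨i, ⟨hi₁, hi₂⟩, rfl⟩ := hz
      have hi := h ⟨i - 1, by omega⟩
      simp only [show i - 1 + 1 = i by omega] at hi
      rw [inner_sub_left, hi, sub_self]
    | zero => exact inner_zero_right _
    | add z w _ _ hz hw => rw [inner_add_right, hz, hw, add_zero]
    | smul t z _ hz => rw [real_inner_smul_right, hz, mul_zero]
  exact sub_eq_zero.mp (inner_self_eq_zero.mp (horth _ (S.span_top ▸ Submodule.mem_top)))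

theorem simple_mem_R (r : Fin n) : S.a (r + 1) ∈ S.R :=
  S.simple_mem _ (by simp)

def ofCoords (c : Fin n → ℤ) : V := ∑ i, (c i : ℝ) • S.a (i + 1)

theorem ofCoords_single (j : Fin n) : S.ofCoords (Pi.single j 1) = S.a (j + 1) := by
  simp [ofCoords, Pi.single_apply]

theorem ofCoords_neg (c : Fin n → ℤ) : S.ofCoords (-c) = -S.ofCoords c := by
  simp [ofCoords, ← Finset.sum_neg_distrib]

theorem ofCoords_sub (c d : Fin n → ℤ) : S.ofCoords (c - d) = S.ofCoords c - S.ofCoords d := by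
  simp [ofCoords, sub_smul, Finset.sum_sub_distrib]

theorem ofCoords_injective : Function.Injective S.ofCoords := by
  have hli : LinearIndependent ℝ fun i : Fin n => S.a (i + 1) :=
    S.indep.comp (fun i : Fin n => ⟨(i : ℕ) + 1, by simp⟩) fun i j hij => by
      simpa [Fin.ext_iff] using hij
  intro c d hcd
  have h := Fintype.linearIndependent_iff.mp hli (fun i => (c i : ℝ) - d i) (by
    simpa [ofCoords, sub_smul, Finset.sum_sub_distrib, sub_eq_zero] using hcd)
  funext i
  exact_mod_cast sub_eq_zero.mp (h i)

theorem exists_ofCoords_of_mem_R {β : V} (hβ : β ∈ S.R) :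
    ∃ c : Fin n → ℤ, β = S.ofCoords c ∧ ((∀ i, 0 ≤ c i) ∨ (∀ i, c i ≤ 0)) := by
  obtain ⟨c, hsign, rfl⟩ := S.root_combo β hβ
  exact ⟨fun i => c (i + 1), Finset.sum_Icc_one_eq_sum_fin n _,
    hsign.imp (fun h i => h _) fun h i => h _⟩

theorem height_ne_zero {c : Fin n → ℤ} (hc : S.ofCoords c ∈ S.R) : height c ≠ 0 := by
  obtain ⟨d, hcd, hsign⟩ := S.exists_ofCoords_of_mem_R hc
  obtain rfl := S.ofCoords_injective hcd
  intro h0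
  have hzero : c = 0 := by
    rcases hsign with hpos | hneg
    · exact funext fun i => (Finset.sum_eq_zero_iff_of_nonneg fun i _ => hpos i).mp h0 i
        (Finset.mem_univ i)
    · have h0' : ∑ i, -c i = 0 := by rw [Finset.sum_neg_distrib, ← height, h0, neg_zero]
      exact funext fun i => neg_eq_zero.mp <|
        (Finset.sum_eq_zero_iff_of_nonneg fun i _ => neg_nonneg.mpr (hneg i)).mp h0' i
          (Finset.mem_univ i)
  exact S.ne_zero _ hc (by simp [hzero, ofCoords])

def HasCartanMatrix (C : Matrix (Fin n) (Fin n) ℤ) : Prop :=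
  ∀ i j : Fin n, ⟪S.a (i + 1), S.a (j + 1)⟫ = C i j

def normTwoRoots : Set V := {β ∈ S.R | ⟪β, β⟫ = 2}

variable {S} {C : Matrix (Fin n) (Fin n) ℤ} (hC : S.HasCartanMatrix C) (hdiag : ∀ j, C j j = 2)
include hC

theorem HasCartanMatrix.inner_ofCoords (c : Fin n → ℤ) (j : Fin n) :
    ⟪S.ofCoords c, S.a (j + 1)⟫ = (c ᵥ* C) j := by
  simp [ofCoords, sum_inner, real_inner_smul_left, hC _ j, Matrix.vecMul, dotProduct]

include hdiag

theorem HasCartanMatrix.simple_mem_normTwoRoots (r : Fin n) :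
    S.ofCoords (Pi.single r 1) ∈ S.normTwoRoots := by
  rw [ofCoords_single]
  exact ⟨simple_mem_R S r, by rw [hC, hdiag]; norm_num⟩

theorem HasCartanMatrix.s_ofCoords (j : Fin n) (c : Fin n → ℤ) :
    S.s (j + 1) (S.ofCoords c) = S.ofCoords (cartanReflect C j c) := by
  rw [s, sref_apply, hC.inner_ofCoords, hC, hdiag, cartanReflect, ofCoords_sub]
  simp [ofCoords, Pi.single_apply]

theorem HasCartanMatrix.prodW_ofCoords (l : List (Fin n)) (c : Fin n → ℤ) :
    S.prodW (l.map fun j : Fin n => (j : ℕ) + 1) (S.ofCoords c) =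
      S.ofCoords (l.foldr (cartanReflect C) c) := by
  induction l with
  | nil => rfl
  | cons j t ih =>
    rw [List.map_cons, prodW_cons, LinearIsometryEquiv.coe_mul, Function.comp_apply, ih,
      hC.s_ofCoords hdiag]
    rfl

theorem HasCartanMatrix.exists_foldr_of_mem_W {u : V ≃ₗᵢ[ℝ] V} (hu : u ∈ S.W) :
    ∃ l : List (Fin n), l.length = S.len u ∧
      ∀ c, u (S.ofCoords c) = S.ofCoords (l.foldr (cartanReflect C) c) := by
  obtain ⟨l, hlen, rfl⟩ := S.exists_fin_word_length_eq_len hu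
  exact ⟨l, hlen, hC.prodW_ofCoords hdiag l⟩

theorem HasCartanMatrix.foldr_mem_normTwoRoots {c : Fin n → ℤ}
    (hc : S.ofCoords c ∈ S.normTwoRoots) (l : List (Fin n)) :
    S.ofCoords (l.foldr (cartanReflect C) c) ∈ S.normTwoRoots := by
  rw [← hC.prodW_ofCoords hdiag]
  refine ⟨S.prodW_apply_mem_R (fun i hi => ?_) hc.1, by
    rw [LinearIsometryEquiv.inner_map_map]; exact hc.2⟩
  obtain ⟨j, -, rfl⟩ := List.mem_map.mp hi
  exact ⟨by omega, j.isLt⟩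

theorem HasCartanMatrix.vecMul_cases {c : Fin n → ℤ} (hc : S.ofCoords c ∈ S.normTwoRoots)
    (j : Fin n) :
    |(c ᵥ* C) j| ≤ 2 ∧ ((c ᵥ* C) j = 2 → c = Pi.single j 1) ∧
      ((c ᵥ* C) j = -2 → c = -Pi.single j 1) := by
  have hsimple := (hC.simple_mem_normTwoRoots hdiag j).2
  rw [ofCoords_single] at hsimple
  have hinner : ⟪S.ofCoords c, S.a (j + 1)⟫ = (c ᵥ* C) j := hC.inner_ofCoords c j
  obtain ⟨hle, hpos⟩ := inner_le_two_of_inner_self_eq_two hc.2 hsimple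
  obtain ⟨hle', hneg⟩ := inner_le_two_of_inner_self_eq_two hc.2
    (by rwa [inner_neg_neg] : ⟪-S.a (j + 1), -S.a (j + 1)⟫ = 2)
  rw [inner_neg_right, hinner] at hle' hneg
  rw [hinner] at hle hpos
  rw [← S.ofCoords_single] at hpos
  rw [← S.ofCoords_single, ← ofCoords_neg] at hneg
  refine ⟨abs_le.mpr ⟨?_, by exact_mod_cast hle⟩, fun h => S.ofCoords_injective (hpos ?_),
    fun h => S.ofCoords_injective (hneg ?_)⟩
  · exact_mod_cast (by linarith : (-2 : ℝ) ≤ (c ᵥ* C) j)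
  · rw [h]; norm_num
  · rw [h]; norm_num

theorem HasCartanMatrix.abs_psi_cartanReflect_sub_le {c : Fin n → ℤ}
    (hc : S.ofCoords c ∈ S.normTwoRoots) (j : Fin n) :
    |psi (cartanReflect C j c) - psi c| ≤ 2 := by
  obtain ⟨hbound, hpos, hneg⟩ := hC.vecMul_cases hdiag hc j
  have hsingle : height (Pi.single j 1 : Fin n → ℤ) = 1 := by simp [height]
  have htwo : (c ᵥ* C) j = 2 → height c = 1 := fun h => by rw [hpos h, hsingle]
  have hmtwo : (c ᵥ* C) j = -2 → height c = -1 := fun h => by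
    rw [hneg h, ← hsingle]
    simp [height]
  have hh := S.height_ne_zero hc.1
  have hh' := S.height_ne_zero (c := cartanReflect C j c) <| by
    rw [← hC.s_ofCoords hdiag]
    exact S.refl_mem _ (simple_mem_R S j) _ hc.1
  rw [height_cartanReflect] at hh'
  rw [abs_le] at hbound
  simp only [psi, height_cartanReflect]
  split_ifs <;> rw [abs_le] <;> constructor <;> omega

theorem HasCartanMatrix.abs_psi_foldr_sub_le {c : Fin n → ℤ} (hc : S.ofCoords c ∈ S.normTwoRoots)
    (l : List (Fin n)) :
    |psi (l.foldr (cartanReflect C) c) - psi c| ≤ 2 * l.length := by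
  induction l with
  | nil => simp
  | cons j t ih =>
    have hstep := hC.abs_psi_cartanReflect_sub_le hdiag (hC.foldr_mem_normTwoRoots hdiag hc t) j
    rw [List.foldr_cons, List.length_cons]
    push_cast
    linarith [abs_sub_le (psi (cartanReflect C j (t.foldr (cartanReflect C) c)))
      (psi (t.foldr (cartanReflect C) c)) (psi c)]

theorem HasCartanMatrix.foldr_single_eq_of_geodesicsAgree {c₀ : Fin n → ℤ}
    (hc₀ : S.ofCoords c₀ ∈ S.normTwoRoots) (l : List (Fin n)) {c : Fin n → ℤ}
    {M : Fin n → Fin n → ℤ} (hgeo : GeodesicsAgree C c₀ l.length c M)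
    (hc : l.foldr (cartanReflect C) c₀ = c) (hpsi : psi c = psi c₀ - 2 * l.length) (i : Fin n) :
    l.foldr (cartanReflect C) (Pi.single i 1) = M i := by
  induction l generalizing c M with
  | nil => rw [hgeo hc.symm]; rfl
  | cons j t ih =>
    have hprev : t.foldr (cartanReflect C) c₀ = cartanReflect C j c := by
      rw [← hc, List.foldr_cons, cartanReflect_cartanReflect hdiag]
    have hstep := hC.abs_psi_cartanReflect_sub_le hdiag (hC.foldr_mem_normTwoRoots hdiag hc₀ t) j
    have hdist := hC.abs_psi_foldr_sub_le hdiag hc₀ t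
    rw [hprev, cartanReflect_cartanReflect hdiag] at hstep
    rw [hprev] at hdist
    rw [List.length_cons] at hpsi
    push_cast at hpsi
    rw [abs_le] at hstep hdist
    have hclimb : psi (cartanReflect C j c) = psi c + 2 := by omega
    rw [List.foldr_cons, ih (hgeo j hclimb) hprev (by omega), cartanReflect_cartanReflect hdiag]

theorem HasCartanMatrix.abs_psi_sub_le_two_mul_len (r : Fin n) {u : V ≃ₗᵢ[ℝ] V} (hu : u ∈ S.W)
    {c : Fin n → ℤ} (huc : u (S.a (r + 1)) = S.ofCoords c) :
    |psi c - psi (Pi.single r 1)| ≤ 2 * S.len u := by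
  obtain ⟨l, hlen, hl⟩ := hC.exists_foldr_of_mem_W hdiag hu
  rw [← S.ofCoords_single, hl] at huc
  rw [← S.ofCoords_injective huc, ← hlen]
  exact hC.abs_psi_foldr_sub_le hdiag (hC.simple_mem_normTwoRoots hdiag r) l

theorem HasCartanMatrix.apply_simple_eq_of_geodesicsAgree (r : Fin n) {u : V ≃ₗᵢ[ℝ] V}
    (hu : u ∈ S.W) {c : Fin n → ℤ} (huc : u (S.a (r + 1)) = S.ofCoords c)
    {M : Fin n → Fin n → ℤ} (hgeo : GeodesicsAgree C (Pi.single r 1) (S.len u) c M)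
    (hpsi : psi c = psi (Pi.single r 1) - 2 * S.len u) (i : Fin n) :
    u (S.a (i + 1)) = S.ofCoords (M i) := by
  obtain ⟨l, hlen, hl⟩ := hC.exists_foldr_of_mem_W hdiag hu
  rw [← S.ofCoords_single, hl] at huc ⊢
  rw [← hlen] at hgeo hpsi
  rw [hC.foldr_single_eq_of_geodesicsAgree hdiag (hC.simple_mem_normTwoRoots hdiag r) l hgeo
    (S.ofCoords_injective huc) hpsi i]

end RootSystemWithBase

section E6

open Matrix RootSystemWithBase

-- Coordinates are indexed by `Fin 6`: the index `i` stands for `α_(i+1)`.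
def cartanE6 : Matrix (Fin 6) (Fin 6) ℤ :=
  !![2, 0, -1, 0, 0, 0; 0, 2, 0, -1, 0, 0; -1, 0, 2, -1, 0, 0;
    0, -1, -1, 2, -1, 0; 0, 0, 0, -1, 2, -1; 0, 0, 0, 0, -1, 2]

def highestRootE6 : Fin 6 → ℤ := ![1, 2, 2, 3, 2, 1]

def v2WordE6 : List (Fin 6) := [1, 3, 4, 2, 5, 3, 0, 2, 4, 3, 1]

theorem cartanE6_diag : ∀ j, cartanE6 j j = 2 := by decide

theorem geodesicsAgree_v2WordE6 :
    GeodesicsAgree cartanE6 (Pi.single 1 1) 11 (-highestRootE6)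
      fun i => v2WordE6.foldr (cartanReflect cartanE6) (Pi.single i 1) := by
  decide +kernel

theorem hasCartanMatrix_cartanE6 (S : RootSystemWithBase V 6)
    (hE : ∀ i ∈ Finset.Icc 1 6, ∀ j ∈ Finset.Icc 1 6,
      ⟪S.a i, S.a j⟫ = if i = j then 2 else if adjE i j then -1 else 0) :
    S.HasCartanMatrix cartanE6 := by
  intro i j
  rw [hE _ (by simp) _ (by simp)]
  fin_cases i <;> fin_cases j <;> simp [adjE, cartanE6]

theorem ofCoords_eq_sum_six (S : RootSystemWithBase V 6) (c : Fin 6 → ℤ) :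
    S.ofCoords c = (c 0 : ℝ) • S.a 1 + (c 1 : ℝ) • S.a 2 + (c 2 : ℝ) • S.a 3 + (c 3 : ℝ) • S.a 4 +
      (c 4 : ℝ) • S.a 5 + (c 5 : ℝ) • S.a 6 := by
  simp [ofCoords, Fin.sum_univ_six]

theorem v2E6_eq (S : RootSystemWithBase V 6) :
    v2E6 S = S.prodW (v2WordE6.map fun j : Fin 6 => (j : ℕ) + 1) := rfl

theorem mem_W_v2E6_and_len_v2E6_le (S : RootSystemWithBase V 6) :
    v2E6 S ∈ S.W ∧ S.len (v2E6 S) ≤ 11 := by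
  have hletters : ∀ i ∈ [2, 4, 5, 3, 6, 4, 1, 3, 5, 4, 2], i ∈ Set.Icc 1 6 := by
    intro i hi
    fin_cases hi <;> simp
  exact ⟨S.prodW_mem_W hletters, S.len_prodW_le hletters⟩

variable {S : RootSystemWithBase V 6} (hC : S.HasCartanMatrix cartanE6)
include hC

theorem v2E6_ofCoords (c : Fin 6 → ℤ) :
    v2E6 S (S.ofCoords c) = S.ofCoords (v2WordE6.foldr (cartanReflect cartanE6) c) := by
  rw [v2E6_eq]
  exact hC.prodW_ofCoords cartanE6_diag v2WordE6 c

theorem v2E6_simple {i : Fin 6} {c : Fin 6 → ℤ}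
    (h : v2WordE6.foldr (cartanReflect cartanE6) (Pi.single i 1) = c) :
    v2E6 S (S.a (i + 1)) = S.ofCoords c := by
  rw [← S.ofCoords_single, v2E6_ofCoords hC, h]

theorem v2E6_a1 : v2E6 S (S.a 1) = S.a 5 := by
  simpa [ofCoords_eq_sum_six] using
    v2E6_simple hC (i := 0) (c := Pi.single 4 1) (by decide +kernel)

theorem v2E6_a3 : v2E6 S (S.a 3) = S.a 6 := by
  simpa [ofCoords_eq_sum_six] using
    v2E6_simple hC (i := 2) (c := Pi.single 5 1) (by decide +kernel)

theorem v2E6_a4 : v2E6 S (S.a 4) = S.a 2 + S.a 3 + (2 : ℝ) • S.a 4 + S.a 5 := by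
  simpa [ofCoords_eq_sum_six] using
    v2E6_simple hC (i := 3) (c := ![0, 1, 1, 2, 1, 0]) (by decide +kernel)

theorem inv_v2E6 : (v2E6 S)⁻¹ = v2E6 S := by
  refine inv_eq_of_mul_eq_one_right <| S.ext_simple fun i => ?_
  rw [LinearIsometryEquiv.coe_mul, LinearIsometryEquiv.coe_one, Function.comp_apply, id,
    ← S.ofCoords_single, v2E6_ofCoords hC, v2E6_ofCoords hC]
  congr 1
  revert i
  decide +kernel

theorem v2E6_highestRootE6 : v2E6 S (S.ofCoords highestRootE6) = -S.a 2 := by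
  rw [v2E6_ofCoords hC, show v2WordE6.foldr (cartanReflect cartanE6) highestRootE6 =
    -Pi.single 1 1 by decide +kernel, ofCoords_neg, S.ofCoords_single]
  rfl

theorem eq_highestRootE6_of_isFundamental {ω : V} (hω : S.IsFundamental 2 ω) :
    ω = S.ofCoords highestRootE6 := by
  refine S.eq_of_inner_simple fun i => ?_
  have h := hω (i + 1) (by simp)
  rw [hC, cartanE6_diag] at h
  rw [hC.inner_ofCoords, show highestRootE6 ᵥ* cartanE6 = Pi.single 1 1 by decide]
  fin_cases i <;> simp at h ⊢ <;> linarith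

theorem v2E6_fundamental_sub_a2 {ω : V} (hω : S.IsFundamental 2 ω) :
    v2E6 S (ω - S.a 2) = ω - S.a 2 := by
  have hcoords : ω - S.a 2 = S.ofCoords (highestRootE6 - Pi.single 1 1) := by
    rw [ofCoords_sub, S.ofCoords_single, eq_highestRootE6_of_isFundamental hC hω]
    rfl
  rw [hcoords, v2E6_ofCoords hC, show v2WordE6.foldr (cartanReflect cartanE6)
    (highestRootE6 - Pi.single 1 1) = highestRootE6 - Pi.single 1 1 by decide +kernel]

theorem le_len_and_eq_v2E6_of_apply_a2 {u : V ≃ₗᵢ[ℝ] V} (hu : u ∈ S.W)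
    (hu₂ : u (S.a 2) = -S.ofCoords highestRootE6) :
    11 ≤ S.len u ∧ (S.len u ≤ 11 → u = v2E6 S) := by
  rw [← ofCoords_neg] at hu₂
  have hbound := hC.abs_psi_sub_le_two_mul_len cartanE6_diag 1 hu hu₂
  rw [show |psi (-highestRootE6) - psi (Pi.single 1 1 : Fin 6 → ℤ)| = 22 by decide] at hbound
  refine ⟨by omega, fun hle => ?_⟩
  have h11 : S.len u = 11 := by omega
  refine S.ext_simple fun i => ?_
  rw [hC.apply_simple_eq_of_geodesicsAgree cartanE6_diag 1 hu hu₂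
    (h11 ▸ geodesicsAgree_v2WordE6) (by rw [h11]; decide) i, ← S.ofCoords_single,
    v2E6_ofCoords hC]

end E6

end

/-- In type `E_6`, with `v_2 = s_2 s_4 s_5 s_3 s_6 s_4 s_1 s_3 s_5 s_4 s_2`:
(1) `v_2` is the unique element of minimal length in `W` with `v_2⁻¹(α_0) = -α_2`, and
`v_2⁻¹ = v_2`;
(2) `v_2(α_1) = α_5`, `v_2(α_3) = α_6`, `v_2(α_4) = α_2 + α_3 + 2α_4 + α_5`, and
`v_2(ω_2 - α_2) = ω_2 - α_2`. -/
theorem statement10 (S : RootSystemWithBase V 6)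
    (hE : ∀ i ∈ Finset.Icc 1 6, ∀ j ∈ Finset.Icc 1 6,
      ⟪S.a i, S.a j⟫ = if i = j then 2 else if adjE i j then -1 else 0)
    (α0 : V) (hα0 : α0 = S.a 1 + (2 : ℝ) • S.a 2 + (2 : ℝ) • S.a 3 + (3 : ℝ) • S.a 4 + (2 : ℝ) • S.a 5 + S.a 6) :
    (v2E6 S ∈ S.W ∧ (v2E6 S)⁻¹ α0 = -(S.a 2) ∧
     (∀ u ∈ S.W, u⁻¹ α0 = -(S.a 2) →
        S.len (v2E6 S) ≤ S.len u ∧ (S.len u ≤ S.len (v2E6 S) → u = v2E6 S)) ∧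
     (v2E6 S)⁻¹ = v2E6 S) ∧
    (v2E6 S (S.a 1) = S.a 5 ∧ v2E6 S (S.a 3) = S.a 6 ∧
     v2E6 S (S.a 4) = S.a 2 + S.a 3 + (2 : ℝ) • S.a 4 + S.a 5 ∧
     ∀ ω : V, S.IsFundamental 2 ω → v2E6 S (ω - S.a 2) = ω - S.a 2) := by
  have hC := hasCartanMatrix_cartanE6 S hE
  have hα0' : α0 = S.ofCoords highestRootE6 := by
    rw [hα0, ofCoords_eq_sum_six]
    simp [highestRootE6]
  obtain ⟨hmem, hlen⟩ := mem_W_v2E6_and_len_v2E6_le S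
  refine ⟨⟨hmem, by rw [inv_v2E6 hC, hα0', v2E6_highestRootE6 hC], fun u hu hu₀ => ?_,
    inv_v2E6 hC⟩, v2E6_a1 hC, v2E6_a3 hC, v2E6_a4 hC, fun ω hω => v2E6_fundamental_sub_a2 hC hω⟩
  rw [LinearIsometryEquiv.coe_inv, LinearIsometryEquiv.symm_apply_eq, map_neg, hα0'] at hu₀
  obtain ⟨hge, huniq⟩ := le_len_and_eq_v2E6_of_apply_a2 hC hu (neg_eq_iff_eq_neg.mp hu₀.symm)
  exact ⟨hlen.trans hge, fun hle => huniq (hle.trans hlen)⟩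

end PaperFormal
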